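/- Let c(t) = (t, t², t³) and S = {c(t) + r·c'(t) : t ∈ ℝ, r > 0} ⊂ ℝ³, the tangent-developable (half-)surface of the twisted cubic. Define for s ∈ ℝ the affine map T_s(x₁,x₂,x₃) = (x₁ + s, x₂ + 2s x₁ + s², x₃ + 3s x₂ + 3s² x₁ + s³), and for λ > 0 the linear map D_λ(x₁,x₂,x₃) = (λ x₁, λ² x₂, λ³ x₃). Then T_s(S) = S and D_λ(S) = S for all s ∈ ℝ, λ > 0, and for any p, q ∈ S there exist s ∈ ℝ and λ > 0 such that (T_s ∘ D_λ)(p) = q. Hence S is affinely homogeneous. -/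
import Mathlib


/-- The twisted cubic `c(t) = (t, t², t³)`. -/
def twistedCubic (t : ℝ) : ℝ × ℝ × ℝ := (t, t ^ 2, t ^ 3)

/-- Its derivative `c'(t) = (1, 2t, 3t²)`. -/
def twistedCubicDeriv (t : ℝ) : ℝ × ℝ × ℝ := (1, 2 * t, 3 * t ^ 2)

/-- The tangent-developable (half-)surface `S = {c(t) + r·c'(t) : t ∈ ℝ, r > 0}` (model (3)). -/
def tangentDev : Set (ℝ × ℝ × ℝ) :=
  {x | ∃ t r : ℝ, 0 < r ∧ x = twistedCubic t + r • twistedCubicDeriv t}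

/-- The affine map `T_s(x₁,x₂,x₃) = (x₁ + s, x₂ + 2sx₁ + s², x₃ + 3sx₂ + 3s²x₁ + s³)`. -/
def Tmap (s : ℝ) : ℝ × ℝ × ℝ → ℝ × ℝ × ℝ := fun x =>
  (x.1 + s, x.2.1 + 2 * s * x.1 + s ^ 2, x.2.2 + 3 * s * x.2.1 + 3 * s ^ 2 * x.1 + s ^ 3)

/-- The linear map `D_λ(x₁,x₂,x₃) = (λx₁, λ²x₂, λ³x₃)`. -/
def Dlam (l : ℝ) : ℝ × ℝ × ℝ → ℝ × ℝ × ℝ := fun x =>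
  (l * x.1, l ^ 2 * x.2.1, l ^ 3 * x.2.2)

lemma Tmap_pt (s t r : ℝ) :
    Tmap s (twistedCubic t + r • twistedCubicDeriv t) =
      twistedCubic (t + s) + r • twistedCubicDeriv (t + s) := by
  simp only [Tmap, twistedCubic, twistedCubicDeriv, Prod.smul_mk, Prod.mk_add_mk,
    smul_eq_mul, Prod.mk.injEq]
  refine ⟨by ring, by ring, by ring⟩

lemma Dlam_pt (l t r : ℝ) :
    Dlam l (twistedCubic t + r • twistedCubicDeriv t) =
      twistedCubic (l * t) + (l * r) • twistedCubicDeriv (l * t) := by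
  simp only [Dlam, twistedCubic, twistedCubicDeriv, Prod.smul_mk, Prod.mk_add_mk,
    smul_eq_mul, Prod.mk.injEq]
  refine ⟨by ring, by ring, by ring⟩

/-- `T_s(S) = S` and `D_λ(S) = S` for all `s ∈ ℝ`, `λ > 0`, and for any `p, q ∈ S` there are
`s ∈ ℝ`, `λ > 0` with `(T_s ∘ D_λ)(p) = q`; hence `S` is affinely homogeneous. -/
theorem tangentDev_affinely_homogeneous :
    (∀ s : ℝ, Tmap s '' tangentDev = tangentDev) ∧
    (∀ l : ℝ, 0 < l → Dlam l '' tangentDev = tangentDev) ∧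
    (∀ p ∈ tangentDev, ∀ q ∈ tangentDev,
      ∃ s l : ℝ, 0 < l ∧ Tmap s (Dlam l p) = q) := by
  refine ⟨?_, ?_, ?_⟩
  · intro s
    ext x
    constructor
    · rintro ⟨y, ⟨t, r, hr, rfl⟩, rfl⟩
      exact ⟨t + s, r, hr, (Tmap_pt s t r).symm ▸ rfl⟩
    · rintro ⟨t, r, hr, rfl⟩
      exact ⟨twistedCubic (t - s) + r • twistedCubicDeriv (t - s), ⟨t - s, r, hr, rfl⟩,
        by rw [Tmap_pt]; ring_nf⟩
  · intro l hl
    ext x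
    constructor
    · rintro ⟨y, ⟨t, r, hr, rfl⟩, rfl⟩
      exact ⟨l * t, l * r, mul_pos hl hr, (Dlam_pt l t r).symm ▸ rfl⟩
    · rintro ⟨t, r, hr, rfl⟩
      refine ⟨twistedCubic (t / l) + (r / l) • twistedCubicDeriv (t / l),
        ⟨t / l, r / l, div_pos hr hl, rfl⟩, ?_⟩
      rw [Dlam_pt]
      rw [mul_div_cancel₀ _ hl.ne', mul_div_cancel₀ _ hl.ne']
  · rintro p ⟨t1, r1, hr1, rfl⟩ q ⟨t2, r2, hr2, rfl⟩
    refine ⟨t2 - (r2 / r1) * t1, r2 / r1, div_pos hr2 hr1, ?_⟩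
    rw [Dlam_pt, Tmap_pt, div_mul_cancel₀ _ hr1.ne']
    have h : r2 / r1 * t1 + (t2 - r2 / r1 * t1) = t2 := by ring
    rw [h]
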